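/- Fix n ≥ 1, 1 ≤ i ≤ n, μ ∈ ℝ, and a smooth function ψ of the variables x_{ab} (1 ≤ a ≤ b ≤ n). Define u(t, x) = (1 + x_{ii}t)^{−μ} · ψ(Φ^i_t(x)) on the open set {(t,x) : 1 + x_{ii}t > 0}. Then u(0, x) = ψ(x) and, for all (t,x) in this set, ∂u/∂t(t, x) = −(F_i^{(μ)} u(t, ·))(x); that is, u(t,·) = exp(−tF_i^{(μ)})ψ. Moreover, for the operator F_0 = −z^{−1}∂/∂x_{1n} (z ≠ 0 a fixed real parameter), the function v(t,x) = ψ(Φ^0_t(x)) satisfies v(0,x) = ψ(x) and ∂v/∂t = −F_0 v. -/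

import Mathlib

/-- Index set for the coordinates `x_{ab}`, `1 ≤ a ≤ b ≤ n`, of the big cell
(realized inside `Fin (n+1) × Fin (n+1)` so that it is a finite type). -/
abbrev TriIdx (n : ℕ) : Type :=
  {p : Fin (n + 1) × Fin (n + 1) // 1 ≤ (p.1 : ℕ) ∧ (p.1 : ℕ) ≤ (p.2 : ℕ) ∧ (p.2 : ℕ) ≤ n}

/-- Constructor for elements of `TriIdx n`. -/
def mk' {n : ℕ} (a b : ℕ) (h1 : 1 ≤ a) (h2 : a ≤ b) (h3 : b ≤ n) : TriIdx n :=
  ⟨(⟨a, by omega⟩, ⟨b, by omega⟩), h1, h2, h3⟩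

/-- Partial derivative `∂ψ/∂x_v` at the point `x`. -/
noncomputable def pd {n : ℕ} (ψ : (TriIdx n → ℝ) → ℝ) (v : TriIdx n)
    (x : TriIdx n → ℝ) : ℝ :=
  deriv (fun s : ℝ => ψ (Function.update x v s)) (x v)

/-- The first-order differential operator `F_i^{(μ)}`. -/
noncomputable def Fop (n i : ℕ) (h1 : 1 ≤ i) (h2 : i ≤ n) (μ : ℝ)
    (ψ : (TriIdx n → ℝ) → ℝ) (x : TriIdx n → ℝ) : ℝ :=
  x (mk' i i h1 le_rfl h2) *
      ((∑ j ∈ (Finset.Icc 1 i).attach,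
          x (mk' j.1 i (by have := Finset.mem_Icc.mp j.2; omega)
              (by have := Finset.mem_Icc.mp j.2; omega) h2) *
            pd ψ (mk' j.1 i (by have := Finset.mem_Icc.mp j.2; omega)
              (by have := Finset.mem_Icc.mp j.2; omega) h2) x)
        - ∑ j ∈ (Finset.Icc 1 (i - 1)).attach,
            x (mk' j.1 (i - 1) (by have := Finset.mem_Icc.mp j.2; omega)
                (by have := Finset.mem_Icc.mp j.2; omega) (by omega)) *
              pd ψ (mk' j.1 (i - 1) (by have := Finset.mem_Icc.mp j.2; omega)
                (by have := Finset.mem_Icc.mp j.2; omega) (by omega)) x)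
    - ∑ j ∈ (Finset.Icc (i + 1) n).attach,
        x (mk' i j.1 h1 (by have := Finset.mem_Icc.mp j.2; omega)
            (by have := Finset.mem_Icc.mp j.2; omega)) *
          pd ψ (mk' (i + 1) j.1 (by omega) (by have := Finset.mem_Icc.mp j.2; omega)
            (by have := Finset.mem_Icc.mp j.2; omega)) x
    + ∑ j ∈ (Finset.Icc 1 (i - 1)).attach,
        x (mk' j.1 i (by have := Finset.mem_Icc.mp j.2; omega)
            (by have := Finset.mem_Icc.mp j.2; omega) h2) *
          pd ψ (mk' j.1 (i - 1) (by have := Finset.mem_Icc.mp j.2; omega)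
            (by have := Finset.mem_Icc.mp j.2; omega) (by omega)) x
    + μ * x (mk' i i h1 le_rfl h2) * ψ x

/-- The substitution `Φ^i_t`: it replaces `x_{ki} ↦ x_{ki}/(1+x_{ii}t)` for `k ≤ i`,
`x_{k,i−1} ↦ −(x_{ki} − x_{k,i−1}x_{ii})t + x_{k,i−1}` for `k ≤ i−1`,
`x_{i+1,l} ↦ x_{il}t + x_{i+1,l}` for `l ≥ i+1`, and fixes all other variables. -/
noncomputable def Phi {n : ℕ} (i : ℕ) (h1 : 1 ≤ i) (h2 : i ≤ n) (t : ℝ)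
    (x : TriIdx n → ℝ) : TriIdx n → ℝ := fun v =>
  if (v.1.2 : ℕ) = i then
    x v / (1 + x (mk' i i h1 le_rfl h2) * t)
  else if h : (v.1.2 : ℕ) + 1 = i then
    -(x (mk' (v.1.1 : ℕ) i v.2.1 (by have := v.2.2.1; omega) h2)
        - x v * x (mk' i i h1 le_rfl h2)) * t + x v
  else if h' : (v.1.1 : ℕ) = i + 1 then
    x (mk' i (v.1.2 : ℕ) h1 (by have := v.2.2.1; omega) v.2.2.2) * t + x v
  else x v

/-- The substitution `Φ⁰_t`: it replaces `x_{1n} ↦ x_{1n} + t/z` and fixes all other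
variables. -/
noncomputable def Phi0 {n : ℕ} (hn : 1 ≤ n) (z t : ℝ) (x : TriIdx n → ℝ) :
    TriIdx n → ℝ :=
  Function.update x (mk' 1 n le_rfl hn le_rfl)
    (x (mk' 1 n le_rfl hn le_rfl) + t / z)

/-! The substitutions `Φ^i_t` form a one-parameter group, `Φ^i_t ∘ Φ^i_s = Φ^i_{s+t}` wherever
`1 + x_{ii} s ≠ 0`, and the weight is a cocycle:
`(1 + x_{ii} s) (1 + (Φ^i_s x)_{ii} t) = 1 + x_{ii} (s + t)`. Hence
`u(s + t, x) = (1 + x_{ii} s)^{-μ} u(t, Φ^i_s x)`, and differentiating at `s = 0` gives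
`-μ x_{ii} u(t, x)` plus the derivative of `u(t, ·)` along the velocity `∂_s Φ^i_s(x)|_{s=0}`;
expanding the latter in partial derivatives yields exactly `-F_i^{(μ)} u(t, ·)`.
For `F_0`, `v(s, ·)` is `v(t, ·)` precomposed with the translation of `x_{1n}` by `(s - t)/z`,
so `∂_s v` is `z⁻¹` times the partial derivative of `v(t, ·)` in `x_{1n}`. -/

namespace TriIdx
variable {n : ℕ}

@[simp] lemma mk'_fst {a b : ℕ} {p1 p2 p3} : ((mk' (n := n) a b p1 p2 p3).1.1 : ℕ) = a := by
  simp [mk']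
@[simp] lemma mk'_snd {a b : ℕ} {p1 p2 p3} : ((mk' (n := n) a b p1 p2 p3).1.2 : ℕ) = b := by
  simp [mk']

lemma sum_ite_col {M : Type*} [AddCommMonoid M] (b : ℕ) (hb : b ≤ n) (g : TriIdx n → M) :
    ∑ v, (if (v.1.2 : ℕ) = b then g v else 0) =
      ∑ j ∈ (Finset.Icc 1 b).attach,
        g (mk' j b (Finset.mem_Icc.mp j.2).1 (Finset.mem_Icc.mp j.2).2 hb) := by
  rw [← Finset.sum_filter]
  symm
  refine Finset.sum_bij
    (fun j _ => mk' j b (Finset.mem_Icc.mp j.2).1 (Finset.mem_Icc.mp j.2).2 hb) ?_ ?_ ?_ ?_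
  · simp
  · intro j _ k _ h
    exact Subtype.ext (by simpa using congrArg (fun v : TriIdx n => (v.1.1 : ℕ)) h)
  · intro v hv
    obtain ⟨-, rfl⟩ := Finset.mem_filter.mp hv
    exact ⟨⟨v.1.1, Finset.mem_Icc.mpr ⟨v.2.1, v.2.2.1⟩⟩, Finset.mem_attach _ _, rfl⟩
  · simp

lemma sum_ite_row {M : Type*} [AddCommMonoid M] (a : ℕ) (ha : 1 ≤ a) (g : TriIdx n → M) :
    ∑ v, (if (v.1.1 : ℕ) = a then g v else 0) =
      ∑ l ∈ (Finset.Icc a n).attach,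
        g (mk' a l ha (Finset.mem_Icc.mp l.2).1 (Finset.mem_Icc.mp l.2).2) := by
  rw [← Finset.sum_filter]
  symm
  refine Finset.sum_bij
    (fun l _ => mk' a l ha (Finset.mem_Icc.mp l.2).1 (Finset.mem_Icc.mp l.2).2) ?_ ?_ ?_ ?_
  · simp
  · intro l _ k _ h
    exact Subtype.ext (by simpa using congrArg (fun v : TriIdx n => (v.1.2 : ℕ)) h)
  · intro v hv
    obtain ⟨-, rfl⟩ := Finset.mem_filter.mp hv
    exact ⟨⟨v.1.2, Finset.mem_Icc.mpr ⟨v.2.2.1, v.2.2.2⟩⟩, Finset.mem_attach _ _, rfl⟩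
  · simp

end TriIdx

open TriIdx

section PartialDerivative
variable {n : ℕ} {f : (TriIdx n → ℝ) → ℝ} {x : TriIdx n → ℝ}

lemma pd_eq_fderiv (hf : DifferentiableAt ℝ f x) (v : TriIdx n) :
    pd f v x = fderiv ℝ f x (Pi.single v 1) := by
  have hf' : DifferentiableAt ℝ f (Function.update x v (x v)) := by
    rwa [Function.update_eq_self]
  have h := hf'.hasFDerivAt.comp_hasDerivAt (x v) (hasDerivAt_update x v (x v))
  rw [Function.update_eq_self] at h
  exact h.deriv

lemma fderiv_apply_eq_sum_pd (hf : DifferentiableAt ℝ f x) (w : TriIdx n → ℝ) :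
    fderiv ℝ f x w = ∑ v, w v * pd f v x := by
  conv_lhs => rw [pi_eq_sum_univ' w]
  simp [pd_eq_fderiv hf]

end PartialDerivative

section Flow
variable {n i : ℕ} (h1 : 1 ≤ i) (h2 : i ≤ n)

lemma Phi_zero (x : TriIdx n → ℝ) : Phi i h1 h2 0 x = x := by
  funext v
  unfold Phi
  split_ifs <;> simp

lemma Phi_diag (t : ℝ) (x : TriIdx n → ℝ) :
    Phi i h1 h2 t x (mk' i i h1 le_rfl h2) =
      x (mk' i i h1 le_rfl h2) / (1 + x (mk' i i h1 le_rfl h2) * t) := by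
  simp [Phi]

lemma Phi_Phi {s : ℝ} (t : ℝ) {x : TriIdx n → ℝ}
    (hs : 1 + x (mk' i i h1 le_rfl h2) * s ≠ 0) :
    Phi i h1 h2 t (Phi i h1 h2 s x) = Phi i h1 h2 (s + t) x := by
  funext v
  simp only [Phi, mk'_fst, mk'_snd]
  split_ifs <;> first | omega | rfl | ring1 | (field_simp; ring1)

noncomputable def PhiVelocity (x : TriIdx n → ℝ) : TriIdx n → ℝ := fun v =>
  if (v.1.2 : ℕ) = i then
    -(x v * x (mk' i i h1 le_rfl h2))
  else if h : (v.1.2 : ℕ) + 1 = i then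
    -(x (mk' (v.1.1 : ℕ) i v.2.1 (by have := v.2.2.1; omega) h2)
        - x v * x (mk' i i h1 le_rfl h2))
  else if h' : (v.1.1 : ℕ) = i + 1 then
    x (mk' i (v.1.2 : ℕ) h1 (by have := v.2.2.1; omega) v.2.2.2)
  else 0

lemma hasDerivAt_Phi_zero (x : TriIdx n → ℝ) :
    HasDerivAt (fun s => Phi i h1 h2 s x) (PhiVelocity h1 h2 x) 0 := by
  refine hasDerivAt_pi.mpr fun v => ?_
  simp only [Phi, PhiVelocity]
  have hlin (a b : ℝ) : HasDerivAt (fun s => a * s + b) a 0 := by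
    simpa using ((hasDerivAt_id (0 : ℝ)).const_mul a).add_const b
  split_ifs
  · refine ((hasDerivAt_const (0 : ℝ) (x v)).fun_div
      (((hasDerivAt_id' (0 : ℝ)).const_mul (x (mk' i i h1 le_rfl h2))).const_add 1)
      (by simp)).congr_deriv ?_
    ring
  · exact hlin _ _
  · exact hlin _ _
  · exact hasDerivAt_const _ _

lemma differentiableAt_Phi {t : ℝ} {x : TriIdx n → ℝ}
    (ht : 1 + x (mk' i i h1 le_rfl h2) * t ≠ 0) : DifferentiableAt ℝ (Phi i h1 h2 t) x := by
  refine differentiableAt_pi.mpr fun v => ?_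
  unfold Phi
  split_ifs <;> fun_prop (disch := exact ht)

lemma PhiVelocity_col (x : TriIdx n → ℝ) (j : ℕ) (p1 : 1 ≤ j) (p2 : j ≤ i) :
    PhiVelocity h1 h2 x (mk' j i p1 p2 h2) =
      -(x (mk' j i p1 p2 h2) * x (mk' i i h1 le_rfl h2)) := by
  simp [PhiVelocity]

lemma PhiVelocity_col_pred (x : TriIdx n → ℝ) (j : ℕ) (p1 : 1 ≤ j) (p2 : j ≤ i - 1)
    (p3 : i - 1 ≤ n) :
    PhiVelocity h1 h2 x (mk' j (i - 1) p1 p2 p3) =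
      -(x (mk' j i p1 (by omega) h2)
        - x (mk' j (i - 1) p1 p2 p3) * x (mk' i i h1 le_rfl h2)) := by
  simp [PhiVelocity, show i - 1 ≠ i by omega, show i - 1 + 1 = i by omega]

lemma PhiVelocity_row (x : TriIdx n → ℝ) (l : ℕ) (p1 : 1 ≤ i + 1) (p2 : i + 1 ≤ l)
    (p3 : l ≤ n) :
    PhiVelocity h1 h2 x (mk' (i + 1) l p1 p2 p3) = x (mk' i l h1 (by omega) p3) := by
  simp [PhiVelocity, show l ≠ i by omega, show l + 1 ≠ i by omega]

lemma Fop_eq_sub_fderiv (μ : ℝ) {f : (TriIdx n → ℝ) → ℝ} {x : TriIdx n → ℝ}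
    (hf : DifferentiableAt ℝ f x) :
    Fop n i h1 h2 μ f x =
      μ * x (mk' i i h1 le_rfl h2) * f x - fderiv ℝ f x (PhiVelocity h1 h2 x) := by
  set V := PhiVelocity h1 h2 x
  -- `PhiVelocity` is supported on columns `i`, `i - 1` and on row `i + 1`.
  have hsplit : ∀ v, V v * pd f v x =
      (if (v.1.2 : ℕ) = i then V v * pd f v x else 0) +
      (if (v.1.2 : ℕ) = i - 1 then V v * pd f v x else 0) +
      (if (v.1.1 : ℕ) = i + 1 then V v * pd f v x else 0) := by
    intro v
    have hv := v.2
    simp only [V, PhiVelocity]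
    split_ifs <;> first | omega | simp
  rw [fderiv_apply_eq_sum_pd hf, Finset.sum_congr rfl fun v _ => hsplit v,
    Finset.sum_add_distrib, Finset.sum_add_distrib, sum_ite_col i h2,
    sum_ite_col (i - 1) (by omega), sum_ite_row (i + 1) (by omega)]
  simp only [V, PhiVelocity_col, PhiVelocity_col_pred, PhiVelocity_row, Fop, neg_mul, sub_mul,
    Finset.sum_neg_distrib, Finset.sum_sub_distrib, mul_sub, Finset.mul_sum]
  ring_nf

end Flow

section FlowAction
variable {n i : ℕ} (h1 : 1 ≤ i) (h2 : i ≤ n) (μ : ℝ) (ψ : (TriIdx n → ℝ) → ℝ)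

noncomputable def flowAction (t : ℝ) (x : TriIdx n → ℝ) : ℝ :=
  (1 + x (mk' i i h1 le_rfl h2) * t) ^ (-μ) * ψ (Phi i h1 h2 t x)

lemma flowAction_zero : flowAction h1 h2 μ ψ 0 = ψ := by
  funext x
  simp [flowAction, Phi_zero]

lemma flowAction_add {s t : ℝ} {x : TriIdx n → ℝ} (hs : 0 < 1 + x (mk' i i h1 le_rfl h2) * s)
    (hst : 0 < 1 + x (mk' i i h1 le_rfl h2) * (s + t)) :
    flowAction h1 h2 μ ψ (s + t) x =
      (1 + x (mk' i i h1 le_rfl h2) * s) ^ (-μ) * flowAction h1 h2 μ ψ t (Phi i h1 h2 s x) := by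
  set d := x (mk' i i h1 le_rfl h2)
  have hcocycle : 1 + d * (s + t) = (1 + d * s) * (1 + d / (1 + d * s) * t) := by
    field_simp
    ring
  have ht : 0 < 1 + d / (1 + d * s) * t := by
    rw [hcocycle] at hst
    exact pos_of_mul_pos_right hst hs.le
  rw [flowAction, flowAction, ← Phi_Phi h1 h2 t hs.ne', Phi_diag, hcocycle,
    Real.mul_rpow hs.le ht.le, mul_assoc]

lemma differentiableAt_flowAction (hψ : Differentiable ℝ ψ) {t : ℝ} {x : TriIdx n → ℝ}
    (ht : 0 < 1 + x (mk' i i h1 le_rfl h2) * t) :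
    DifferentiableAt ℝ (flowAction h1 h2 μ ψ t) x := by
  have hpow : DifferentiableAt ℝ
      (fun y : TriIdx n → ℝ => (1 + y (mk' i i h1 le_rfl h2) * t) ^ (-μ)) x := by
    fun_prop (disch := exact Or.inl ht.ne')
  exact hpow.mul ((hψ _).comp x (differentiableAt_Phi h1 h2 ht.ne'))

theorem hasDerivAt_flowAction (hψ : Differentiable ℝ ψ) {t : ℝ} {x : TriIdx n → ℝ}
    (ht : 0 < 1 + x (mk' i i h1 le_rfl h2) * t) :
    HasDerivAt (fun s => flowAction h1 h2 μ ψ s x)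
      (-(Fop n i h1 h2 μ (flowAction h1 h2 μ ψ t) x)) t := by
  set d := x (mk' i i h1 le_rfl h2)
  set g := flowAction h1 h2 μ ψ t
  have hg : DifferentiableAt ℝ g x := differentiableAt_flowAction h1 h2 μ ψ hψ ht
  have hline : HasDerivAt (fun s : ℝ => 1 + d * s) d 0 := by
    simpa using ((hasDerivAt_id (0 : ℝ)).const_mul d).const_add 1
  have hpow : HasDerivAt (fun s : ℝ => (1 + d * s) ^ (-μ)) (-μ * d) 0 := by
    simpa [mul_comm] using hline.rpow_const (p := -μ) (by simp)
  have hmove :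
      HasDerivAt (fun s => g (Phi i h1 h2 s x)) (fderiv ℝ g x (PhiVelocity h1 h2 x)) 0 := by
    have hg0 : DifferentiableAt ℝ g (Phi i h1 h2 0 x) := by rwa [Phi_zero]
    have h := hg0.hasFDerivAt.comp_hasDerivAt 0 (hasDerivAt_Phi_zero h1 h2 x)
    rwa [Phi_zero] at h
  have h0 : HasDerivAt (fun s => (1 + d * s) ^ (-μ) * g (Phi i h1 h2 s x))
      (-(Fop n i h1 h2 μ g x)) (t - t) := by
    rw [sub_self, Fop_eq_sub_fderiv h1 h2 μ hg]
    refine (hpow.fun_mul hmove).congr_deriv ?_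
    rw [Phi_zero, mul_zero, add_zero, Real.one_rpow]
    ring
  have hnear : ∀ᶠ s in nhds t, 0 < 1 + d * (s - t) ∧ 0 < 1 + d * s := by
    have hshift : Continuous fun s : ℝ => 1 + d * (s - t) := by fun_prop
    have hlin : Continuous fun s : ℝ => 1 + d * s := by fun_prop
    exact ((hshift.tendsto t).eventually_const_lt (by simp)).and
      ((hlin.tendsto t).eventually_const_lt ht)
  refine (h0.comp_sub_const t t).congr_of_eventuallyEq ?_
  filter_upwards [hnear] with s ⟨hs, hs'⟩
  rw [← flowAction_add h1 h2 μ ψ hs (by rwa [sub_add_cancel]), sub_add_cancel]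

end FlowAction

section Translation
variable {n : ℕ} (hn : 1 ≤ n) (z : ℝ)

lemma Phi0_update (t σ : ℝ) (x : TriIdx n → ℝ) :
    Phi0 hn z t (Function.update x (mk' 1 n le_rfl hn le_rfl) σ) =
      Function.update x (mk' 1 n le_rfl hn le_rfl) (σ + t / z) := by
  simp [Phi0]

lemma hasDerivAt_comp_Phi0 {ψ : (TriIdx n → ℝ) → ℝ} (hψ : Differentiable ℝ ψ) (t : ℝ)
    (x : TriIdx n → ℝ) :
    HasDerivAt (fun s => ψ (Phi0 hn z s x))
      (z⁻¹ * pd (fun y => ψ (Phi0 hn z t y)) (mk' 1 n le_rfl hn le_rfl) x) t := by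
  have hupd := hasDerivAt_update x (mk' 1 n le_rfl hn le_rfl)
  set h := fun σ => ψ (Phi0 hn z t (Function.update x (mk' 1 n le_rfl hn le_rfl) σ))
  have hh : DifferentiableAt ℝ h (x (mk' 1 n le_rfl hn le_rfl)) := by
    simp only [h, Phi0_update]
    exact (hψ _).comp _ ((hupd _).differentiableAt.comp _ (differentiableAt_id.add_const _))
  have hline : HasDerivAt (fun s => x (mk' 1 n le_rfl hn le_rfl) + (s - t) / z) z⁻¹ t := by
    simpa using
      (((hasDerivAt_id t).sub_const t).div_const z).const_add (x (mk' 1 n le_rfl hn le_rfl))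
  have hcomp := HasDerivAt.comp_of_eq t hh.hasDerivAt hline (by simp)
  refine (hcomp.congr_deriv (mul_comm _ _)).congr_of_eventuallyEq (.of_forall fun s => ?_)
  simp only [h, Function.comp, Phi0_update]
  rw [Phi0]
  ring_nf

end Translation

theorem stmt4_general (n i : ℕ) (hn : 1 ≤ n) (h1 : 1 ≤ i) (h2 : i ≤ n) (μ : ℝ)
    (ψ : (TriIdx n → ℝ) → ℝ) (hψ : ContDiff ℝ (⊤ : ℕ∞) ψ)
    (u : ℝ → (TriIdx n → ℝ) → ℝ)
    (hu : ∀ t x, u t x =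
      (1 + x (mk' i i h1 le_rfl h2) * t) ^ (-μ) * ψ (Phi i h1 h2 t x))
    (z : ℝ)
    (v : ℝ → (TriIdx n → ℝ) → ℝ)
    (hv : ∀ t x, v t x = ψ (Phi0 hn z t x)) :
    (∀ x, u 0 x = ψ x) ∧
    (∀ t (x : TriIdx n → ℝ), 0 < 1 + x (mk' i i h1 le_rfl h2) * t →
      HasDerivAt (fun s => u s x) (-(Fop n i h1 h2 μ (u t) x)) t) ∧
    (∀ x, v 0 x = ψ x) ∧
    (∀ t (x : TriIdx n → ℝ),
      HasDerivAt (fun s => v s x) (z⁻¹ * pd (v t) (mk' 1 n le_rfl hn le_rfl) x) t) := by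
  have hψ' : Differentiable ℝ ψ := hψ.differentiable (by simp)
  obtain rfl : u = flowAction h1 h2 μ ψ := funext₂ hu
  obtain rfl : v = fun t x => ψ (Phi0 hn z t x) := funext₂ hv
  exact ⟨fun x => by rw [flowAction_zero],
    fun t x ht => hasDerivAt_flowAction h1 h2 μ ψ hψ' ht,
    fun x => by simp [Phi0],
    fun t x => hasDerivAt_comp_Phi0 hn z hψ' t x⟩

/-- `u(t,x) = (1+x_{ii}t)^{−μ} ψ(Φ^i_t(x))` satisfies `u(0,·) = ψ` and
`∂u/∂t = −F_i^{(μ)} u(t,·)` on `{1 + x_{ii}t > 0}` (that is, `u(t,·) = exp(−tF_i^{(μ)})ψ`);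
moreover `v(t,x) = ψ(Φ⁰_t(x))` satisfies `v(0,·) = ψ` and `∂v/∂t = −F_0 v` where
`F_0 = −z^{−1}∂/∂x_{1n}`. -/
theorem stmt4 (n i : ℕ) (hn : 1 ≤ n) (h1 : 1 ≤ i) (h2 : i ≤ n) (μ : ℝ)
    (ψ : (TriIdx n → ℝ) → ℝ) (hψ : ContDiff ℝ (⊤ : ℕ∞) ψ)
    (u : ℝ → (TriIdx n → ℝ) → ℝ)
    (hu : ∀ t x, u t x =
      (1 + x (mk' i i h1 le_rfl h2) * t) ^ (-μ) * ψ (Phi i h1 h2 t x))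
    (z : ℝ) (hz : z ≠ 0)
    (v : ℝ → (TriIdx n → ℝ) → ℝ)
    (hv : ∀ t x, v t x = ψ (Phi0 hn z t x)) :
    (∀ x, u 0 x = ψ x) ∧
    (∀ t (x : TriIdx n → ℝ), 0 < 1 + x (mk' i i h1 le_rfl h2) * t →
      HasDerivAt (fun s => u s x) (-(Fop n i h1 h2 μ (u t) x)) t) ∧
    (∀ x, v 0 x = ψ x) ∧
    (∀ t (x : TriIdx n → ℝ),
      HasDerivAt (fun s => v s x) (z⁻¹ * pd (v t) (mk' 1 n le_rfl hn le_rfl) x) t) :=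
  stmt4_general n i hn h1 h2 μ ψ hψ u hu z v hv
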